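/- Suppose N: (0,∞) → [0,∞) is nondecreasing and ∫₀^∞ e^{-tλ} dN(λ) ~ C·t^{-n} as t → 0⁺ for some constants C > 0 and n ≥ 1. Then N(λ) ~ (C/Γ(n+1)) λⁿ as λ → ∞. -/

import Mathlib

/-!
The rescaled measures `ν_λ := λ⁻ⁿ • (x ↦ x / λ)_* μ` have Laplace transforms
`λ⁻ⁿ L(r / λ) → C r⁻ⁿ`, the Laplace transform of the measure `ρ` on `[0, ∞)` with
`ρ (-∞, s] = C sⁿ / Γ(n + 1)`. Karamata's argument turns convergence of `∫ e^{-kx} dν_λ` for all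
integers `k ≥ 1` into convergence of `∫ p(e^{-x}) e^{-x} dν_λ` for polynomials `p`; one-sided
Weierstrass approximation gives one-sided bounds for continuous `f` in place of `p`; squeezing the
indicator of `(-∞, 1]` between two such functions then shows `ν_λ (-∞, 1] = N(λ) / λⁿ → ρ (-∞, 1]`,
as `ρ` has no atom at `1`.
-/

open MeasureTheory Filter Set Real Polynomial Topology

structure LaplaceFinite (ν : Measure ℝ) : Prop where
  ae_nonneg : ∀ᵐ x ∂ν, 0 ≤ x
  integrable_exp : ∀ k : ℕ, Integrable (fun x => exp (-((k + 1) * x))) ν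

structure LaplaceTendsto {ι : Type*} (μ : ι → Measure ℝ) (l : Filter ι) (ρ : Measure ℝ) :
    Prop where
  eventually : ∀ᶠ i in l, LaplaceFinite (μ i)
  limit : LaplaceFinite ρ
  tendsto : ∀ k : ℕ, Tendsto (fun i => ∫ x, exp (-((k + 1) * x)) ∂μ i) l
    (𝓝 (∫ x, exp (-((k + 1) * x)) ∂ρ))

lemma exists_polynomial_le_le_add {f : ℝ → ℝ} (hf : ContinuousOn f (Icc 0 1)) {δ : ℝ}
    (hδ : 0 < δ) : ∃ p : ℝ[X], ∀ y ∈ Icc (0 : ℝ) 1, f y ≤ p.eval y ∧ p.eval y ≤ f y + δ := by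
  obtain ⟨q, hq⟩ := exists_polynomial_near_of_continuousOn 0 1 f hf (δ / 2) (half_pos hδ)
  refine ⟨q + Polynomial.C (δ / 2), fun y hy => ?_⟩
  obtain ⟨hlow, hhigh⟩ := abs_lt.1 (hq y hy)
  simp only [eval_add, eval_C]
  constructor <;> linarith

lemma exp_neg_mem_Icc {x : ℝ} (hx : 0 ≤ x) : exp (-x) ∈ Icc (0 : ℝ) 1 :=
  ⟨(exp_pos _).le, exp_le_one_iff.2 (neg_nonpos.2 hx)⟩

lemma exp_neg_pow_mul_exp_neg (k : ℕ) (x : ℝ) :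
    exp (-x) ^ k * exp (-x) = exp (-((k + 1) * x)) := by
  rw [← pow_succ, ← exp_nat_mul]
  push_cast
  ring_nf

lemma exists_continuous_indicator_Iic_le_le {A B : ℝ} (hAB : A < B) :
    ∃ f : ℝ → ℝ, Continuous f ∧ ∀ x, (Iic A).indicator 1 x ≤ f (exp (-x)) * exp (-x) ∧
      f (exp (-x)) * exp (-x) ≤ (Iic B).indicator 1 x := by
  set b := exp (-B)
  set c := exp (-A)
  have hc : 0 < c := exp_pos _
  have hbc : b < c := exp_lt_exp.2 (by linarith)
  -- `f y * y` vanishes for `y ≤ b`, equals `1` for `y ≥ c`, and lies in `[0, 1]` for `y > 0`.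
  refine ⟨fun y => max 0 (min 1 ((y - b) / (c - b))) / max y c, ?_, fun x => ?_⟩
  · exact (continuous_const.max (continuous_const.min (by fun_prop))).div (by fun_prop)
      fun y => (hc.trans_le (le_max_right y c)).ne'
  beta_reduce
  set y := exp (-x)
  have hy : 0 < y := exp_pos _
  set r := max 0 (min 1 ((y - b) / (c - b))) with hr_def
  have hr₁ : r ≤ 1 := max_le zero_le_one (min_le_left _ _)
  have hmax : 0 < max y c := hc.trans_le (le_max_right y c)
  have hle : r / max y c * y ≤ 1 := by
    rw [div_mul_eq_mul_div, div_le_one hmax]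
    nlinarith [le_max_left y c]
  have hnonneg : 0 ≤ r / max y c * y := by positivity
  constructor
  · by_cases hxA : x ≤ A
    · have hcy : c ≤ y := exp_le_exp.2 (by linarith)
      have hr : r = 1 := by
        rw [hr_def, min_eq_left ((one_le_div (sub_pos.2 hbc)).2 (by linarith)),
          max_eq_right zero_le_one]
      rw [indicator_of_mem (mem_Iic.2 hxA), hr, max_eq_left hcy, one_div_mul_cancel hy.ne']
      rfl
    · rwa [indicator_of_notMem (by simpa using hxA)]
  · by_cases hxB : x ≤ B
    · rwa [indicator_of_mem (mem_Iic.2 hxB)]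
    · have hyb : y < b := exp_lt_exp.2 (by linarith [not_le.1 hxB])
      have hr : r = 0 := max_eq_left (min_le_of_right_le
        (div_nonpos_of_nonpos_of_nonneg (by linarith) (by linarith)))
      rw [indicator_of_notMem (by simpa using hxB), hr, zero_div, zero_mul]

namespace LaplaceFinite

variable {ν : Measure ℝ}

lemma integrable_exp_neg (hν : LaplaceFinite ν) : Integrable (fun x => exp (-x)) ν := by
  simpa using hν.integrable_exp 0

lemma measure_Iic_lt_top (hν : LaplaceFinite ν) (s : ℝ) : ν (Iic s) < ⊤ := by
  convert hν.integrable_exp_neg.measure_norm_ge_lt_top (exp_pos (-s)) using 2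
  ext x
  simp [norm_of_nonneg (exp_pos _).le]

lemma smul (hν : LaplaceFinite ν) {c : ENNReal} (hc : c ≠ ⊤) : LaplaceFinite (c • ν) where
  ae_nonneg := Measure.ae_smul_measure hν.ae_nonneg c
  integrable_exp k := (hν.integrable_exp k).smul_measure hc

lemma integrable_comp_exp_neg_mul (hν : LaplaceFinite ν) {f : ℝ → ℝ} (hf : Continuous f) :
    Integrable (fun x => f (exp (-x)) * exp (-x)) ν := by
  obtain ⟨K, hK⟩ := isCompact_Icc.exists_bound_of_continuousOn (hf.continuousOn (s := Icc 0 1))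
  refine (hν.integrable_exp_neg.const_mul K).mono' (by fun_prop) ?_
  filter_upwards [hν.ae_nonneg] with x hx
  rw [norm_mul, norm_of_nonneg (exp_pos _).le]
  exact mul_le_mul_of_nonneg_right (hK _ (exp_neg_mem_Icc hx)) (exp_pos _).le

lemma integral_eval_comp_exp_neg_mul (hν : LaplaceFinite ν) (p : ℝ[X]) :
    ∫ x, p.eval (exp (-x)) * exp (-x) ∂ν =
      ∑ k ∈ Finset.range (p.natDegree + 1), p.coeff k * ∫ x, exp (-((k + 1) * x)) ∂ν := by
  simp_rw [eval_eq_sum_range, Finset.sum_mul, mul_assoc, exp_neg_pow_mul_exp_neg]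
  rw [integral_finsetSum _ fun k _ => (hν.integrable_exp k).const_mul _]
  simp_rw [integral_const_mul]

lemma measureReal_Iic_le_integral (hν : LaplaceFinite ν) {f : ℝ → ℝ} (hf : Continuous f) {s : ℝ}
    (hle : ∀ x, (Iic s).indicator 1 x ≤ f (exp (-x)) * exp (-x)) :
    ν.real (Iic s) ≤ ∫ x, f (exp (-x)) * exp (-x) ∂ν := by
  rw [← integral_indicator_one measurableSet_Iic]
  exact integral_mono ((integrable_indicator_iff measurableSet_Iic).2
    (integrableOn_const (hν.measure_Iic_lt_top s).ne)) (hν.integrable_comp_exp_neg_mul hf) hle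

lemma integral_le_measureReal_Iic (hν : LaplaceFinite ν) {f : ℝ → ℝ} (hf : Continuous f) {s : ℝ}
    (hle : ∀ x, f (exp (-x)) * exp (-x) ≤ (Iic s).indicator 1 x) :
    ∫ x, f (exp (-x)) * exp (-x) ∂ν ≤ ν.real (Iic s) := by
  rw [← integral_indicator_one measurableSet_Iic]
  exact integral_mono (hν.integrable_comp_exp_neg_mul hf) ((integrable_indicator_iff
    measurableSet_Iic).2 (integrableOn_const (hν.measure_Iic_lt_top s).ne)) hle

end LaplaceFinite

namespace LaplaceTendsto

variable {ι : Type*} {l : Filter ι} {μ : ι → Measure ℝ} {ρ : Measure ℝ}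

lemma tendsto_integral_eval_comp_exp_neg_mul (h : LaplaceTendsto μ l ρ) (p : ℝ[X]) :
    Tendsto (fun i => ∫ x, p.eval (exp (-x)) * exp (-x) ∂μ i) l
      (𝓝 (∫ x, p.eval (exp (-x)) * exp (-x) ∂ρ)) := by
  rw [h.limit.integral_eval_comp_exp_neg_mul]
  refine (tendsto_finsetSum _ fun k _ => (h.tendsto k).const_mul (p.coeff k)).congr' ?_
  filter_upwards [h.eventually] with i hi
  exact (hi.integral_eval_comp_exp_neg_mul p).symm

lemma eventually_integral_lt (h : LaplaceTendsto μ l ρ) {f : ℝ → ℝ} (hf : Continuous f) {b : ℝ}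
    (hb : ∫ x, f (exp (-x)) * exp (-x) ∂ρ < b) :
    ∀ᶠ i in l, ∫ x, f (exp (-x)) * exp (-x) ∂μ i < b := by
  set I := ∫ x, f (exp (-x)) * exp (-x) ∂ρ
  set K := ∫ x, exp (-x) ∂ρ
  have hK : 0 ≤ K := integral_nonneg fun x => (exp_pos _).le
  set δ := (b - I) / (K + 1)
  have hδ : 0 < δ := div_pos (by linarith) (by linarith)
  obtain ⟨p, hp⟩ := exists_polynomial_le_le_add hf.continuousOn hδ
  have hpρ : ∫ x, p.eval (exp (-x)) * exp (-x) ∂ρ < b := calc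
    _ ≤ ∫ x, (f (exp (-x)) * exp (-x) + δ * exp (-x)) ∂ρ := by
      refine integral_mono_ae (h.limit.integrable_comp_exp_neg_mul p.continuous)
        ((h.limit.integrable_comp_exp_neg_mul hf).add
          (h.limit.integrable_exp_neg.const_mul δ)) ?_
      filter_upwards [h.limit.ae_nonneg] with x hx
      nlinarith [(hp _ (exp_neg_mem_Icc hx)).2, exp_pos (-x)]
    _ = I + δ * K := by
      rw [integral_add (h.limit.integrable_comp_exp_neg_mul hf)
        (h.limit.integrable_exp_neg.const_mul δ), integral_const_mul]
    _ < I + δ * (K + 1) := by nlinarith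
    _ = b := by rw [div_mul_cancel₀ _ (by linarith)]; ring
  filter_upwards [h.eventually, (h.tendsto_integral_eval_comp_exp_neg_mul p).eventually
    (gt_mem_nhds hpρ)] with i hi hpi
  refine lt_of_le_of_lt (integral_mono_ae (hi.integrable_comp_exp_neg_mul hf)
    (hi.integrable_comp_exp_neg_mul p.continuous) ?_) hpi
  filter_upwards [hi.ae_nonneg] with x hx
  exact mul_le_mul_of_nonneg_right (hp _ (exp_neg_mem_Icc hx)).1 (exp_pos _).le

lemma eventually_lt_integral (h : LaplaceTendsto μ l ρ) {f : ℝ → ℝ} (hf : Continuous f) {a : ℝ}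
    (ha : a < ∫ x, f (exp (-x)) * exp (-x) ∂ρ) :
    ∀ᶠ i in l, a < ∫ x, f (exp (-x)) * exp (-x) ∂μ i := by
  have := h.eventually_integral_lt hf.neg (b := -a) (by simpa [neg_mul, integral_neg] using ha)
  filter_upwards [this] with i hi
  simpa [neg_mul, integral_neg] using hi

theorem tendsto_measureReal_Iic (h : LaplaceTendsto μ l ρ) {s : ℝ}
    (hs : ContinuousAt (fun s => ρ.real (Iic s)) s) :
    Tendsto (fun i => (μ i).real (Iic s)) l (𝓝 (ρ.real (Iic s))) := by
  refine tendsto_order.2 ⟨fun a ha => ?_, fun b hb => ?_⟩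
  · obtain ⟨A, haA, hAs⟩ := (((hs.eventually (lt_mem_nhds ha)).filter_mono
      nhdsWithin_le_nhds).and (self_mem_nhdsWithin (s := Iio s))).exists
    obtain ⟨f, hf, hsandwich⟩ := exists_continuous_indicator_Iic_le_le hAs
    have hρf := h.limit.measureReal_Iic_le_integral hf fun x => (hsandwich x).1
    filter_upwards [h.eventually, h.eventually_lt_integral hf (haA.trans_le hρf)] with i hi hfi
    exact hfi.trans_le (hi.integral_le_measureReal_Iic hf fun x => (hsandwich x).2)
  · obtain ⟨B, hbB, hsB⟩ := (((hs.eventually (gt_mem_nhds hb)).filter_mono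
      nhdsWithin_le_nhds).and (self_mem_nhdsWithin (s := Ioi s))).exists
    obtain ⟨f, hf, hsandwich⟩ := exists_continuous_indicator_Iic_le_le hsB
    have hρf := h.limit.integral_le_measureReal_Iic hf fun x => (hsandwich x).2
    filter_upwards [h.eventually, h.eventually_integral_lt hf (hρf.trans_lt hbB)] with i hi hfi
    exact (hi.measureReal_Iic_le_integral hf fun x => (hsandwich x).1).trans_lt hfi

end LaplaceTendsto

noncomputable def powMeasure (a : ℝ) : Measure ℝ :=
  (volume.restrict (Ioi 0)).map fun y => y ^ a⁻¹

section powMeasure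

variable {a : ℝ}

lemma measureReal_powMeasure_Iic (ha : 0 < a) {s : ℝ} (hs : 0 ≤ s) :
    (powMeasure a).real (Iic s) = s ^ a := by
  have hpre : (fun y : ℝ => y ^ a⁻¹) ⁻¹' Iic s ∩ Ioi 0 = Ioc 0 (s ^ a) := by
    ext y
    simp only [mem_inter_iff, mem_preimage, mem_Iic, mem_Ioi, mem_Ioc]
    constructor
    · rintro ⟨hys, hy⟩
      exact ⟨hy, (rpow_inv_le_iff_of_pos hy.le hs ha).1 hys⟩
    · rintro ⟨hy, hys⟩
      exact ⟨(rpow_inv_le_iff_of_pos hy.le hs ha).2 hys, hy⟩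
  rw [measureReal_def, powMeasure, Measure.map_apply (by fun_prop) measurableSet_Iic,
    Measure.restrict_apply (measurableSet_Iic.preimage (by fun_prop)), hpre, volume_Ioc, sub_zero,
    ENNReal.toReal_ofReal (by positivity)]

lemma continuousAt_measureReal_powMeasure_Iic (ha : 0 < a) {s : ℝ} (hs : 0 < s) :
    ContinuousAt (fun s => (powMeasure a).real (Iic s)) s :=
  (continuousAt_id.rpow_const (Or.inl hs.ne')).congr <| by
    filter_upwards [lt_mem_nhds hs] with t ht
    exact (measureReal_powMeasure_Iic ha ht.le).symm

lemma integral_exp_neg_mul_powMeasure (ha : 0 < a) {r : ℝ} (hr : 0 < r) :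
    ∫ x, exp (-(r * x)) ∂powMeasure a = r ^ (-a) * Gamma (a + 1) := by
  rw [powMeasure, integral_map (by fun_prop) (by fun_prop)]
  simpa [neg_mul, one_div, inv_inv, neg_div] using
    integral_exp_neg_mul_rpow (inv_pos.2 ha) hr

lemma laplaceFinite_powMeasure (ha : 0 < a) : LaplaceFinite (powMeasure a) where
  ae_nonneg := by
    rw [powMeasure, ae_map_iff (by fun_prop) measurableSet_Ici]
    filter_upwards [ae_restrict_mem measurableSet_Ioi] with y hy
    exact rpow_nonneg (le_of_lt hy) _
  integrable_exp k := by
    refine .of_integral_ne_zero ?_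
    rw [integral_exp_neg_mul_powMeasure ha (by positivity)]
    exact (mul_pos (rpow_pos_of_pos (by positivity) _) (Gamma_pos_of_pos (by linarith))).ne'

end powMeasure

noncomputable def rescale (μ : Measure ℝ) (n : ℕ) (lam : ℝ) : Measure ℝ :=
  ENNReal.ofReal ((lam ^ n)⁻¹) • μ.map (· / lam)

section rescale

variable {μ : Measure ℝ} {n : ℕ} {lam : ℝ}

lemma integral_rescale (hlam : 0 < lam) {g : ℝ → ℝ} (hg : Continuous g) :
    ∫ x, g x ∂rescale μ n lam = (lam ^ n)⁻¹ * ∫ x, g (x / lam) ∂μ := by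
  rw [rescale, integral_smul_measure, integral_map (by fun_prop) hg.aestronglyMeasurable,
    ENNReal.toReal_ofReal (by positivity), smul_eq_mul]

lemma measureReal_rescale_Iic_one (hlam : 0 < lam) :
    (rescale μ n lam).real (Iic 1) = μ.real (Iic lam) / lam ^ n := by
  have hpre : (· / lam) ⁻¹' Iic (1 : ℝ) = Iic lam := by
    ext x
    simp [div_le_one hlam]
  rw [rescale, measureReal_ennreal_smul_apply, measureReal_def, measureReal_def,
    Measure.map_apply (by fun_prop) measurableSet_Iic, hpre, ENNReal.toReal_ofReal (by positivity),
    inv_mul_eq_div]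

lemma laplaceFinite_rescale (hμ : ∀ᵐ x ∂μ, 0 ≤ x)
    (hexp : ∀ t : ℝ, 0 < t → Integrable (fun x => exp (-(t * x))) μ) (hlam : 0 < lam) :
    LaplaceFinite (rescale μ n lam) where
  ae_nonneg := by
    refine Measure.ae_smul_measure ?_ _
    rw [ae_map_iff (by fun_prop) measurableSet_Ici]
    filter_upwards [hμ] with x hx
    exact div_nonneg hx hlam.le
  integrable_exp k := by
    refine Integrable.smul_measure ?_ ENNReal.ofReal_ne_top
    rw [integrable_map_measure (by fun_prop) (by fun_prop)]
    refine (hexp ((k + 1) / lam) (by positivity)).congr (ae_of_all _ fun x => ?_)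
    simp only [Function.comp_apply]
    ring_nf

end rescale

section Laplace

variable {μ : Measure ℝ} {n : ℕ} {C : ℝ}

lemma integrable_exp_neg_mul_of_tendsto (hμ : ∀ᵐ x ∂μ, 0 ≤ x) (hC : C ≠ 0)
    (h : Tendsto (fun t : ℝ => t ^ n * ∫ x, exp (-(t * x)) ∂μ) (𝓝[>] 0) (𝓝 C)) {t : ℝ}
    (ht : 0 < t) : Integrable (fun x => exp (-(t * x))) μ := by
  by_contra hnot
  -- Below `t` the integrand only grows, so it is not integrable and the integral is the junk `0`.
  have hzero : ∀ s ∈ Ioo 0 t, s ^ n * ∫ x, exp (-(s * x)) ∂μ = 0 := by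
    intro s hs
    refine mul_eq_zero_of_right _ (integral_undef fun hs' => hnot (hs'.mono' (by fun_prop) ?_))
    filter_upwards [hμ] with x hx
    rw [norm_of_nonneg (exp_pos _).le]
    exact exp_le_exp.2 (by nlinarith [hs.2])
  refine hC (tendsto_nhds_unique h (tendsto_const_nhds.congr' ?_))
  filter_upwards [Ioo_mem_nhdsGT ht] with s hs
  exact (hzero s hs).symm

lemma tendsto_inv_pow_mul_integral_exp_neg_div
    (h : Tendsto (fun t : ℝ => t ^ n * ∫ x, exp (-(t * x)) ∂μ) (𝓝[>] 0) (𝓝 C)) {r : ℝ}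
    (hr : 0 < r) :
    Tendsto (fun lam : ℝ => (lam ^ n)⁻¹ * ∫ x, exp (-(r * (x / lam))) ∂μ) atTop
      (𝓝 (C / r ^ n)) := by
  have hdiv : Tendsto (fun lam : ℝ => r / lam) atTop (𝓝[>] 0) :=
    tendsto_nhdsWithin_iff.2 ⟨tendsto_const_nhds.div_atTop tendsto_id,
      (eventually_gt_atTop 0).mono fun lam hlam => div_pos hr hlam⟩
  refine ((h.comp hdiv).div_const (r ^ n)).congr' ?_
  filter_upwards [eventually_gt_atTop 0] with lam hlam
  have hx : ∀ x, r / lam * x = r * (x / lam) := fun x => by ring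
  simp only [Function.comp_apply, hx, div_pow]
  field_simp

lemma laplaceTendsto_rescale (hn : 1 ≤ n) (hμ : ∀ᵐ x ∂μ, 0 ≤ x) (hC : 0 < C)
    (h : Tendsto (fun t : ℝ => t ^ n * ∫ x, exp (-(t * x)) ∂μ) (𝓝[>] 0) (𝓝 C)) :
    LaplaceTendsto (rescale μ n) atTop (ENNReal.ofReal (C / Gamma (n + 1)) • powMeasure n) where
  eventually := by
    filter_upwards [eventually_gt_atTop 0] with lam hlam
    exact laplaceFinite_rescale hμ (fun t ht => integrable_exp_neg_mul_of_tendsto hμ hC.ne' h ht)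
      hlam
  limit := (laplaceFinite_powMeasure (by positivity)).smul ENNReal.ofReal_ne_top
  tendsto k := by
    have hk : (0 : ℝ) < k + 1 := by positivity
    have hΓ : 0 < Gamma (n + 1) := Gamma_pos_of_pos (by positivity)
    rw [integral_smul_measure, integral_exp_neg_mul_powMeasure (by positivity) hk,
      ENNReal.toReal_ofReal (by positivity), smul_eq_mul, rpow_neg hk.le, rpow_natCast]
    convert (tendsto_inv_pow_mul_integral_exp_neg_div h hk).congr' ?_ using 2
    · field_simp
    · filter_upwards [eventually_gt_atTop 0] with lam hlam
      exact (integral_rescale hlam (g := fun x => exp (-((k + 1) * x))) (by fun_prop)).symm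

end Laplace

/-- Karamata's Tauberian theorem: if `N(λ) = μ(Iic λ)` is the (nondecreasing)
counting function of a measure `μ` supported on `[0,∞)` and
`∫ e^{-tλ} dμ(λ) ~ C t^{-n}` as `t → 0⁺`, then `N(λ) ~ C λⁿ/Γ(n+1)` as `λ → ∞`. -/
theorem stmt16 (n : ℕ) (hn : 1 ≤ n) (C : ℝ) (hC : 0 < C)
    (μ : Measure ℝ) (hμ : μ (Set.Iio 0) = 0)
    (h : Tendsto (fun t : ℝ => t ^ n * ∫ x, Real.exp (-(t * x)) ∂μ)
      (nhdsWithin 0 (Set.Ioi 0)) (nhds C)) :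
    Tendsto (fun lam : ℝ => (μ (Set.Iic lam)).toReal / lam ^ n)
      atTop (nhds (C / Real.Gamma ((n : ℝ) + 1))) := by
  have hμ₀ : ∀ᵐ x ∂μ, 0 ≤ x := by
    rw [ae_iff]
    simp only [not_le]
    exact hμ
  set ρ := ENNReal.ofReal (C / Gamma (n + 1)) • powMeasure n
  have hρ : ContinuousAt (fun s => ρ.real (Iic s)) 1 := by
    simp only [ρ, measureReal_ennreal_smul_apply]
    exact (continuousAt_measureReal_powMeasure_Iic (by positivity) one_pos).const_mul _
  have hlim := (laplaceTendsto_rescale hn hμ₀ hC h).tendsto_measureReal_Iic hρ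
  have hρ₁ : ρ.real (Iic 1) = C / Gamma (n + 1) := by
    rw [measureReal_ennreal_smul_apply, measureReal_powMeasure_Iic (by positivity) zero_le_one,
      one_rpow, mul_one, ENNReal.toReal_ofReal (by positivity)]
  refine hρ₁ ▸ hlim.congr' ?_
  filter_upwards [eventually_gt_atTop 0] with lam hlam
  exact measureReal_rescale_Iic_one hlam
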